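/- Let λ and σ be complex numbers with |λ| = 1 and |σ| < 1. Then for every ε > 0 there exists a 2×2 complex matrix E with all entries of modulus less than ε such that diag(λ,0) + E is *congruent to the matrix [[0,1],[σ,0]]. -/

import Mathlib

/-! Perturbing `diag(λ, 0)` by the antidiagonal matrix `[[0, d], [σ d, 0]]` with `d` real and
small gives `[[λ, d], [σ d, 0]]`, and the lower triangular `S = [[1, 0], [-μ/d, 1/d]]` reduces it
to `[[λ - μ - σ μ̄, 1], [σ, 0]]`. So it suffices to solve `μ + σ μ̄ = λ`, which is possible because
the ℝ-linear map `μ ↦ μ + σ μ̄` is invertible when `|σ| ≠ 1`. -/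

open Matrix ComplexConjugate

theorem Complex.exists_add_mul_conj_eq {σ : ℂ} (hσ : ‖σ‖ ≠ 1) (lam : ℂ) :
    ∃ μ : ℂ, μ + σ * conj μ = lam := by
  have hq : 1 - σ * conj σ ≠ 0 := by
    rw [Complex.mul_conj, ← Complex.ofReal_one, ← Complex.ofReal_sub, Complex.ofReal_ne_zero,
      sub_ne_zero, Complex.normSq_eq_norm_sq]
    intro h
    exact hσ (by nlinarith [norm_nonneg σ])
  have hq' : 1 - conj σ * σ ≠ 0 := by rwa [mul_comm]
  refine ⟨(lam - σ * conj lam) / (1 - σ * conj σ), ?_⟩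
  simp only [map_div₀, map_sub, map_mul, map_one, Complex.conj_conj]
  field_simp
  ring

theorem conjTranspose_mul_mul_eq_of_add_mul_star_eq {K : Type*} [Field K] [StarRing K] {lam σ μ d : K}
    (hd : d ≠ 0) (hd_star : star d = d) (hμ : μ + σ * star μ = lam) :
    (!![1, 0; -μ / d, 1 / d])ᴴ * !![lam, d; σ * d, 0] * !![1, 0; -μ / d, 1 / d] =
      !![0, 1; σ, 0] := by
  have hS : (!![1, 0; -μ / d, 1 / d])ᴴ = !![1, -star μ / d; 0, 1 / d] := by
    ext i j
    fin_cases i <;> fin_cases j <;> simp [star_div₀, hd_star]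
  rw [hS, mul_fin_two, mul_fin_two, ← hμ]
  ext i j
  fin_cases i <;> fin_cases j
  all_goals
    simp only [Fin.zero_eta, Fin.mk_one, of_apply, cons_val', cons_val_zero, cons_val_one,
      empty_val', cons_val_fin_one]
    field_simp
    ring

theorem arrow_diag_lambda0_to_sigma_block_general (lam σ : ℂ)
    (hσ : ‖σ‖ < 1) :
    ∀ ε : ℝ, 0 < ε → ∃ E : Matrix (Fin 2) (Fin 2) ℂ,
      (∀ i j, ‖E i j‖ < ε) ∧
      ∃ S : Matrix (Fin 2) (Fin 2) ℂ, S.det ≠ 0 ∧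
        Sᴴ * (!![lam, 0; 0, 0] + E) * S = !![0, 1; σ, 0] := by
  intro ε hε
  obtain ⟨μ, hμ⟩ := Complex.exists_add_mul_conj_eq hσ.ne lam
  set d : ℂ := ((ε / 2 : ℝ) : ℂ)
  have hd : d ≠ 0 := Complex.ofReal_ne_zero.mpr (by positivity)
  have hd_norm : ‖d‖ = ε / 2 := by simp [d, abs_of_pos hε]
  refine ⟨!![0, d; σ * d, 0], ?_, !![1, 0; -μ / d, 1 / d], ?_, ?_⟩
  · have hσd : ‖σ‖ * (ε / 2) < ε := by nlinarith [norm_nonneg σ]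
    intro i j
    fin_cases i <;> fin_cases j <;> simp [hε, hσd, hd_norm]
  · simpa [det_fin_two_of] using hd
  · convert conjTranspose_mul_mul_eq_of_add_mul_star_eq hd (Complex.conj_ofReal _) hμ using 3
    simp

theorem arrow_diag_lambda0_to_sigma_block (lam σ : ℂ)
    (hlam : ‖lam‖ = 1) (hσ : ‖σ‖ < 1) :
    ∀ ε : ℝ, 0 < ε → ∃ E : Matrix (Fin 2) (Fin 2) ℂ,
      (∀ i j, ‖E i j‖ < ε) ∧
      ∃ S : Matrix (Fin 2) (Fin 2) ℂ, S.det ≠ 0 ∧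
        Sᴴ * (!![lam, 0; 0, 0] + E) * S = !![0, 1; σ, 0] :=
  arrow_diag_lambda0_to_sigma_block_general lam σ hσ
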